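/- arXiv:1603.06281 — 3 statements merged into one kernel-verified Lean document; each statement's English description precedes it below -/
import Mathlib

section
/- Let f(T,V) = kTV/(1 + k₁T + k₂V) with k, k₁, k₂ ≥ 0. For T, V, V̂ > 0 with k₂ > 0, the expression V/V̂ - f(T,V)/f(T,V̂) + 1 - (V/V̂)·(f(T,V̂)/f(T,V)) is nonnegative, and equals zero if and only if V = V̂. -/
/-!
Write `f(T, V) = c V / (a + b V)` with `c = k T`, `a = 1 + k₁ T`, `b = k₂`. With `x = V / V̂` and
`r = (a + b V̂) / (a + b V)` one has `f(T, V) / f(T, V̂) = x r`, so the expression factors as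
`(1 - r)(x - 1/r) = b (V - V̂) / (a + b V) · a (V - V̂) / (V̂ (a + b V̂))`, a nonnegative multiple of
`(V - V̂)²` that is positive unless `V = V̂`.
-/

noncomputable section

def saturatingRate (c a b x : ℝ) : ℝ := c * x / (a + b * x)

def ratioDefect (g : ℝ → ℝ) (x y : ℝ) : ℝ := x / y - g x / g y + 1 - x / y * (g y / g x)

section

variable {c a b x y : ℝ}

theorem ratioDefect_saturatingRate (hc : c ≠ 0) (hx : x ≠ 0) (hy : y ≠ 0)
    (hax : a + b * x ≠ 0) (hay : a + b * y ≠ 0) :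
    ratioDefect (saturatingRate c a b) x y =
      a * b * (x - y) ^ 2 / (y * (a + b * x) * (a + b * y)) := by
  unfold ratioDefect saturatingRate
  -- `field_simp` looks for the side conditions in the form `a + x * b ≠ 0`
  rw [mul_comm b x, mul_comm b y] at *
  field_simp
  ring

theorem ratioDefect_saturatingRate_nonneg (hc : c ≠ 0) (ha : 0 < a) (hb : 0 ≤ b)
    (hx : 0 < x) (hy : 0 < y) : 0 ≤ ratioDefect (saturatingRate c a b) x y := by
  rw [ratioDefect_saturatingRate hc hx.ne' hy.ne' (by positivity) (by positivity)]
  positivity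

theorem ratioDefect_saturatingRate_eq_zero_iff (hc : c ≠ 0) (ha : 0 < a) (hb : 0 < b)
    (hx : 0 < x) (hy : 0 < y) : ratioDefect (saturatingRate c a b) x y = 0 ↔ x = y := by
  have hax : 0 < a + b * x := by positivity
  have hay : 0 < a + b * y := by positivity
  rw [ratioDefect_saturatingRate hc hx.ne' hy.ne' hax.ne' hay.ne']
  simp [ha.ne', hb.ne', hy.ne', hax.ne', hay.ne', sub_eq_zero]

end

end

theorem f_expr_nonneg (k k₁ k₂ T V Vh : ℝ)
    (hk : 0 < k) (hk₁ : 0 ≤ k₁) (hk₂ : 0 < k₂)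
    (hT : 0 < T) (hV : 0 < V) (hVh : 0 < Vh) :
    let f : ℝ → ℝ → ℝ := fun T V => k * T * V / (1 + k₁ * T + k₂ * V)
    0 ≤ V / Vh - f T V / f T Vh + 1 - (V / Vh) * (f T Vh / f T V) ∧
    (V / Vh - f T V / f T Vh + 1 - (V / Vh) * (f T Vh / f T V) = 0 ↔ V = Vh) := by
  intro f
  have hc : k * T ≠ 0 := (mul_pos hk hT).ne'
  have ha : 0 < 1 + k₁ * T := by positivity
  change 0 ≤ ratioDefect (saturatingRate (k * T) (1 + k₁ * T) k₂) V Vh ∧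
    (ratioDefect (saturatingRate (k * T) (1 + k₁ * T) k₂) V Vh = 0 ↔ V = Vh)
  exact ⟨ratioDefect_saturatingRate_nonneg hc ha hk₂.le hV hVh,
    ratioDefect_saturatingRate_eq_zero_iff hc ha hk₂ hV hVh⟩
end

section
/- Under assumptions (H2) and (H3), the point (T̂, T̂*, V̂, Ŷ, Â) with T̂* = γ/β, V̂ = b/g, Â = (Nδγg - βcb)/(βqb), Ŷ = (λ - dT̂ - e^{ωh}δT̂*)/(e^{ωh} p T̂*), and T̂ the positive root of the quadratic d g k₁ T² + (d k₂ b + d g - λ g k₁ + k b)T - λ(g + k₂b) = 0, satisfies the stationary system: 0 = λ - dT̂ - f(T̂,V̂); 0 = e^{-ωh} f(T̂,V̂) - δT̂* - pŶT̂*; 0 = NδT̂* - cV̂ - qÂV̂; 0 = βT̂*Ŷ - γŶ; 0 = gÂV̂ - bÂ, where f(T,V) = kTV/(1+k₁T+k₂V). -/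
/-!
Writing `V̂ = b/g` and `D = 1 + k₁T̂ + k₂V̂`, the defining quadratic of `T̂` is
`g · ((dT̂ - λ) D + kT̂V̂)`, so it says exactly that `f(T̂, V̂) = λ - dT̂`; the remaining four
equations are then identities in the explicit formulas for `T̂*`, `V̂`, `Ŷ`, `Â`.
-/

theorem equilibrium_quadratic_eq_mul {lam d k g b k₁ k₂ T : ℝ} (hg : g ≠ 0) :
    d * g * k₁ * T ^ 2 + (d * k₂ * b + d * g - lam * g * k₁ + k * b) * T - lam * (g + k₂ * b) =
      g * ((d * T - lam) * (1 + k₁ * T + k₂ * (b / g)) + k * T * (b / g)) := by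
  field_simp
  ring

theorem saturated_eq_sub_of_equilibrium_quadratic {lam d k g b k₁ k₂ T : ℝ} (hg : g ≠ 0)
    (hD : 1 + k₁ * T + k₂ * (b / g) ≠ 0)
    (hquad : d * g * k₁ * T ^ 2 + (d * k₂ * b + d * g - lam * g * k₁ + k * b) * T
      - lam * (g + k₂ * b) = 0) :
    k * T * (b / g) / (1 + k₁ * T + k₂ * (b / g)) = lam - d * T := by
  rw [equilibrium_quadratic_eq_mul hg, mul_eq_zero, or_iff_right hg] at hquad
  rw [div_eq_iff hD]
  linear_combination hquad

theorem equilibrium_satisfies_system_general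
    (lam d k δ p N c q β γ g b ω h k₁ k₂ : ℝ)
    (hp : 0 < p)
    (hq : 0 < q) (hβ : 0 < β) (hγ : 0 < γ)
    (hg : 0 < g) (hb : 0 < b)
    (hk₁ : 0 ≤ k₁) (hk₂ : 0 ≤ k₂)
    (Th Ts Vh Yh Ah : ℝ)
    (hTs : Ts = γ / β) (hVh : Vh = b / g)
    (hAh : Ah = (N * δ * γ * g - β * c * b) / (β * q * b))
    (hThroot : 0 < Th ∧
      d * g * k₁ * Th^2 + (d * k₂ * b + d * g - lam * g * k₁ + k * b) * Th
        - lam * (g + k₂ * b) = 0)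
    (hYh : Yh = (lam - d * Th - Real.exp (ω * h) * δ * Ts)
        / (Real.exp (ω * h) * p * Ts)) :
    let f : ℝ → ℝ → ℝ := fun T V => k * T * V / (1 + k₁ * T + k₂ * V)
    0 = lam - d * Th - f Th Vh ∧
    0 = Real.exp (-(ω * h)) * f Th Vh - δ * Ts - p * Yh * Ts ∧
    0 = N * δ * Ts - c * Vh - q * Ah * Vh ∧
    0 = β * Ts * Yh - γ * Yh ∧
    0 = g * Ah * Vh - b * Ah := by
  intro f
  obtain ⟨hTh, hquad⟩ := hThroot
  subst hTs hVh hAh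
  have hf : f Th (b / g) = lam - d * Th :=
    saturated_eq_sub_of_equilibrium_quadratic hg.ne' (by positivity) hquad
  refine ⟨by rw [hf]; ring, ?_, ?_, ?_, ?_⟩
  · rw [hf, hYh, Real.exp_neg]
    field_simp
    ring
  all_goals field_simp; ring

theorem equilibrium_satisfies_system
    (lam d k δ p N c q β γ g b ω h k₁ k₂ : ℝ)
    (hlam : 0 < lam) (hd : 0 < d) (hk : 0 < k) (hδ : 0 < δ) (hp : 0 < p)
    (hN : 0 < N) (hc : 0 < c) (hq : 0 < q) (hβ : 0 < β) (hγ : 0 < γ)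
    (hg : 0 < g) (hb : 0 < b) (hω : 0 < ω) (hh : 0 < h)
    (hk₁ : 0 ≤ k₁) (hk₂ : 0 ≤ k₂)
    (Th Ts Vh Yh Ah : ℝ)
    (hTs : Ts = γ / β) (hVh : Vh = b / g)
    (hAh : Ah = (N * δ * γ * g - β * c * b) / (β * q * b))
    (hThroot : 0 < Th ∧
      d * g * k₁ * Th^2 + (d * k₂ * b + d * g - lam * g * k₁ + k * b) * Th
        - lam * (g + k₂ * b) = 0)
    (hYh : Yh = (lam - d * Th - Real.exp (ω * h) * δ * Ts)
        / (Real.exp (ω * h) * p * Ts))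
    (H2 : N * δ * γ * g > β * c * b)
    (H3 : lam > d * Th + δ * γ / β * Real.exp (ω * h)) :
    let f : ℝ → ℝ → ℝ := fun T V => k * T * V / (1 + k₁ * T + k₂ * V)
    0 = lam - d * Th - f Th Vh ∧
    0 = Real.exp (-(ω * h)) * f Th Vh - δ * Ts - p * Yh * Ts ∧
    0 = N * δ * Ts - c * Vh - q * Ah * Vh ∧
    0 = β * Ts * Yh - γ * Yh ∧
    0 = g * Ah * Vh - b * Ah :=
  equilibrium_satisfies_system_general lam d k δ p N c q β γ g b ω h k₁ k₂ hp hq hβ hγ hg hb hk₁ hk₂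
    Th Ts Vh Yh Ah hTs hVh hAh hThroot hYh
end

section
/- Under assumptions (H2) and (H3), the system 0 = λ - dT̂ - f(T̂,V̂), 0 = e^{-ωh} f(T̂,V̂) - δT̂* - pŶT̂*, 0 = NδT̂* - cV̂ - qÂV̂, 0 = βT̂*Ŷ - γŶ, 0 = gÂV̂ - bÂ has a unique solution with all five coordinates strictly positive. -/
/-!
Dividing the last two equations by `Â > 0` and `Ŷ > 0` forces `V̂ = b / g` and `T̂* = γ / β`.
With `V̂ = b / g` the first equation becomes the quadratic defining `T̂`, which has at most one
positive root because its leading coefficient is nonnegative and its constant term negative.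
The second and third equations are then linear in `Ŷ` and `Â`, and their solutions are positive
by (H3) and (H2) respectively.
-/

theorem eq_of_pos_roots_of_quadratic {a b c x y : ℝ} (ha : 0 ≤ a) (hc : 0 < c)
    (hx : 0 < x) (hy : 0 < y) (hxr : a * x ^ 2 + b * x - c = 0)
    (hyr : a * y ^ 2 + b * y - c = 0) : x = y := by
  have hy' : 0 < a * y + b :=
    (mul_pos_iff_of_pos_right hy).mp (by linear_combination hc - hyr)
  have hxy : 0 < a * (x + y) + b := by nlinarith [mul_nonneg ha hx.le]
  have : (x - y) * (a * (x + y) + b) = 0 := by linear_combination hxr - hyr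
  exact sub_eq_zero.mp ((mul_eq_zero.mp this).resolve_right hxy.ne')

theorem balance_iff_quadratic {lam d k g b k₁ k₂ T V : ℝ} (hg : g ≠ 0) (hV : g * V = b)
    (hD : 1 + k₁ * T + k₂ * V ≠ 0) :
    0 = lam - d * T - k * T * V / (1 + k₁ * T + k₂ * V) ↔
      d * g * k₁ * T ^ 2 + (d * k₂ * b + d * g - lam * g * k₁ + k * b) * T
        - lam * (g + k₂ * b) = 0 := by
  have key : g * ((lam - d * T) * (1 + k₁ * T + k₂ * V) - k * T * V) =
      -(d * g * k₁ * T ^ 2 + (d * k₂ * b + d * g - lam * g * k₁ + k * b) * T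
        - lam * (g + k₂ * b)) := by
    linear_combination (lam * k₂ - d * k₂ * T - k * T) * hV
  rw [eq_comm, sub_eq_zero, eq_div_iff hD, ← sub_eq_zero, ← mul_right_inj' hg, mul_zero, key,
    neg_eq_zero]

/-- `x = (T, T*, V, Y, A)`. -/
def IsEquilibrium (lam d k δ p N c q β γ g b ω h k₁ k₂ : ℝ) (x : ℝ × ℝ × ℝ × ℝ × ℝ) : Prop :=
  0 = lam - d * x.1 - k * x.1 * x.2.2.1 / (1 + k₁ * x.1 + k₂ * x.2.2.1) ∧
  0 = Real.exp (-(ω * h)) * (k * x.1 * x.2.2.1 / (1 + k₁ * x.1 + k₂ * x.2.2.1))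
    - δ * x.2.1 - p * x.2.2.2.1 * x.2.1 ∧
  0 = N * δ * x.2.1 - c * x.2.2.1 - q * x.2.2.2.2 * x.2.2.1 ∧
  0 = β * x.2.1 * x.2.2.2.1 - γ * x.2.2.2.1 ∧
  0 = g * x.2.2.2.2 * x.2.2.1 - b * x.2.2.2.2

def IsPositive (x : ℝ × ℝ × ℝ × ℝ × ℝ) : Prop :=
  0 < x.1 ∧ 0 < x.2.1 ∧ 0 < x.2.2.1 ∧ 0 < x.2.2.2.1 ∧ 0 < x.2.2.2.2

section

variable {lam d k δ p N c q β γ g b ω h k₁ k₂ : ℝ}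

theorem isEquilibrium_of_quadratic (hg : 0 < g) (hb : 0 < b) (hβ : β ≠ 0) (hγ : γ ≠ 0)
    (hp : p ≠ 0) (hq : q ≠ 0) (hk₁ : 0 ≤ k₁) (hk₂ : 0 ≤ k₂) {Th : ℝ} (hTh : 0 < Th)
    (hquad : d * g * k₁ * Th ^ 2 + (d * k₂ * b + d * g - lam * g * k₁ + k * b) * Th
      - lam * (g + k₂ * b) = 0) :
    IsEquilibrium lam d k δ p N c q β γ g b ω h k₁ k₂
      (Th, γ / β, b / g, (Real.exp (-(ω * h)) * (lam - d * Th) * β / γ - δ) / p,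
        (N * δ * γ * g / (β * b) - c) / q) := by
  have hV : g * (b / g) = b := mul_div_cancel₀ b hg.ne'
  have e1 := (balance_iff_quadratic (lam := lam) (d := d) (k := k) hg.ne' hV
    (by positivity : 0 < 1 + k₁ * Th + k₂ * (b / g)).ne').mpr hquad
  have hf : k * Th * (b / g) / (1 + k₁ * Th + k₂ * (b / g)) = lam - d * Th := by linarith
  refine ⟨e1, ?_, ?_, ?_, ?_⟩ <;> dsimp only
  · rw [hf]; field_simp; ring
  · field_simp; ring
  · field_simp; ring
  · field_simp; ring

theorem isPositive_candidate (hb : 0 < b) (hβ : 0 < β) (hγ : 0 < γ) (hp : 0 < p) (hq : 0 < q)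
    (hg : 0 < g) {Th : ℝ} (hTh : 0 < Th) (H2 : N * δ * γ * g > β * c * b)
    (H3 : lam > d * Th + δ * γ / β * Real.exp (ω * h)) :
    IsPositive (Th, γ / β, b / g, (Real.exp (-(ω * h)) * (lam - d * Th) * β / γ - δ) / p,
        (N * δ * γ * g / (β * b) - c) / q) := by
  refine ⟨hTh, div_pos hγ hβ, div_pos hb hg, div_pos ?_ hp, div_pos ?_ hq⟩
  · have hH3 : δ * γ * Real.exp (ω * h) < (lam - d * Th) * β := by
      rw [← div_lt_iff₀ hβ, mul_div_right_comm]
      linarith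
    rw [sub_pos, lt_div_iff₀ hγ]
    calc δ * γ = Real.exp (-(ω * h)) * (δ * γ * Real.exp (ω * h)) := by
          rw [Real.exp_neg]; field_simp
      _ < Real.exp (-(ω * h)) * ((lam - d * Th) * β) := by gcongr
      _ = Real.exp (-(ω * h)) * (lam - d * Th) * β := by ring
  · rw [sub_pos, lt_div_iff₀ (by positivity)]
    linarith

theorem IsEquilibrium.eq_of_isPositive (hlam : 0 < lam) (hd : 0 ≤ d) (hg : 0 < g) (hb : 0 < b)
    (hβ : β ≠ 0) (hp : p ≠ 0) (hq : q ≠ 0) (hk₁ : 0 ≤ k₁) (hk₂ : 0 ≤ k₂)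
    {x y : ℝ × ℝ × ℝ × ℝ × ℝ} (hx : IsEquilibrium lam d k δ p N c q β γ g b ω h k₁ k₂ x)
    (hx0 : IsPositive x) (hy : IsEquilibrium lam d k δ p N c q β γ g b ω h k₁ k₂ y)
    (hy0 : IsPositive y) : x = y := by
  obtain ⟨T, S, V, Y, A⟩ := x
  obtain ⟨T', S', V', Y', A'⟩ := y
  obtain ⟨hT, hS, hV, hY, hA⟩ := hx0
  obtain ⟨hT', -, -, hY', hA'⟩ := hy0
  obtain ⟨e1, e2, e3, e4, e5⟩ := hx
  obtain ⟨e1', e2', e3', e4', e5'⟩ := hy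
  dsimp only at *
  have hgV : g * V = b := mul_right_cancel₀ hA.ne' (by linear_combination -e5)
  have hgV' : g * V' = b := mul_right_cancel₀ hA'.ne' (by linear_combination -e5')
  have hβS : β * S = γ := mul_right_cancel₀ hY.ne' (by linear_combination -e4)
  have hβS' : β * S' = γ := mul_right_cancel₀ hY'.ne' (by linear_combination -e4')
  obtain rfl : V = V' := mul_left_cancel₀ hg.ne' (hgV.trans hgV'.symm)
  obtain rfl : S = S' := mul_left_cancel₀ hβ (hβS.trans hβS'.symm)
  obtain rfl : T = T' := eq_of_pos_roots_of_quadratic (by positivity) (by positivity) hT hT'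
    ((balance_iff_quadratic hg.ne' hgV (by positivity)).mp e1)
    ((balance_iff_quadratic hg.ne' hgV (by positivity)).mp e1')
  obtain rfl : Y = Y' := mul_left_cancel₀ (mul_ne_zero hp hS.ne') (by linear_combination e2 - e2')
  obtain rfl : A = A' := mul_left_cancel₀ (mul_ne_zero hq hV.ne') (by linear_combination e3 - e3')
  rfl

end

theorem equilibrium_exists_unique_general
    (lam d k δ p N c q β γ g b ω h k₁ k₂ : ℝ)
    (hlam : 0 < lam) (hd : 0 < d) (hp : 0 < p)
    (hq : 0 < q) (hβ : 0 < β) (hγ : 0 < γ)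
    (hg : 0 < g) (hb : 0 < b)
    (hk₁ : 0 ≤ k₁) (hk₂ : 0 ≤ k₂)
    (Th : ℝ)
    (hThroot : 0 < Th ∧
      d * g * k₁ * Th^2 + (d * k₂ * b + d * g - lam * g * k₁ + k * b) * Th
        - lam * (g + k₂ * b) = 0)
    (H2 : N * δ * γ * g > β * c * b)
    (H3 : lam > d * Th + δ * γ / β * Real.exp (ω * h)) :
    let f : ℝ → ℝ → ℝ := fun T V => k * T * V / (1 + k₁ * T + k₂ * V)
    ∃! x : ℝ × ℝ × ℝ × ℝ × ℝ,
      (0 < x.1 ∧ 0 < x.2.1 ∧ 0 < x.2.2.1 ∧ 0 < x.2.2.2.1 ∧ 0 < x.2.2.2.2) ∧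
      0 = lam - d * x.1 - f x.1 x.2.2.1 ∧
      0 = Real.exp (-(ω * h)) * f x.1 x.2.2.1 - δ * x.2.1 - p * x.2.2.2.1 * x.2.1 ∧
      0 = N * δ * x.2.1 - c * x.2.2.1 - q * x.2.2.2.2 * x.2.2.1 ∧
      0 = β * x.2.1 * x.2.2.2.1 - γ * x.2.2.2.1 ∧
      0 = g * x.2.2.2.2 * x.2.2.1 - b * x.2.2.2.2 := by
  intro f
  obtain ⟨hTh, hquad⟩ := hThroot
  exact existsUnique_of_exists_of_unique
    ⟨_, isPositive_candidate hb hβ hγ hp hq hg hTh H2 H3,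
      isEquilibrium_of_quadratic hg hb hβ.ne' hγ.ne' hp.ne' hq.ne' hk₁ hk₂ hTh hquad⟩
    fun _ _ ⟨hx0, hx⟩ ⟨hy0, hy⟩ =>
      IsEquilibrium.eq_of_isPositive hlam hd.le hg hb hβ.ne' hp.ne' hq.ne' hk₁ hk₂ hx hx0 hy hy0

theorem equilibrium_exists_unique
    (lam d k δ p N c q β γ g b ω h k₁ k₂ : ℝ)
    (hlam : 0 < lam) (hd : 0 < d) (hk : 0 < k) (hδ : 0 < δ) (hp : 0 < p)
    (hN : 0 < N) (hc : 0 < c) (hq : 0 < q) (hβ : 0 < β) (hγ : 0 < γ)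
    (hg : 0 < g) (hb : 0 < b) (hω : 0 < ω) (hh : 0 < h)
    (hk₁ : 0 ≤ k₁) (hk₂ : 0 ≤ k₂)
    (Th : ℝ)
    (hThroot : 0 < Th ∧
      d * g * k₁ * Th^2 + (d * k₂ * b + d * g - lam * g * k₁ + k * b) * Th
        - lam * (g + k₂ * b) = 0)
    (H2 : N * δ * γ * g > β * c * b)
    (H3 : lam > d * Th + δ * γ / β * Real.exp (ω * h)) :
    let f : ℝ → ℝ → ℝ := fun T V => k * T * V / (1 + k₁ * T + k₂ * V)
    ∃! x : ℝ × ℝ × ℝ × ℝ × ℝ,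
      (0 < x.1 ∧ 0 < x.2.1 ∧ 0 < x.2.2.1 ∧ 0 < x.2.2.2.1 ∧ 0 < x.2.2.2.2) ∧
      0 = lam - d * x.1 - f x.1 x.2.2.1 ∧
      0 = Real.exp (-(ω * h)) * f x.1 x.2.2.1 - δ * x.2.1 - p * x.2.2.2.1 * x.2.1 ∧
      0 = N * δ * x.2.1 - c * x.2.2.1 - q * x.2.2.2.2 * x.2.2.1 ∧
      0 = β * x.2.1 * x.2.2.2.1 - γ * x.2.2.2.1 ∧
      0 = g * x.2.2.2.2 * x.2.2.1 - b * x.2.2.2.2 :=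
  equilibrium_exists_unique_general lam d k δ p N c q β γ g b ω h k₁ k₂ hlam hd hp hq hβ hγ hg hb
    hk₁ hk₂ Th hThroot H2 H3
end
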